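/- Let A be a C*-algebra and D ⊆ A an abelian closed *-subalgebra containing an approximate unit for A, and let n be a normaliser of D in A. Then there is a unique homeomorphism α_n : supp°(n*n) → supp°(nn*) such that φ(n*n)·(α_n(φ))(d) = φ(n* d n) for all φ ∈ supp°(n*n) and all d ∈ D. -/

import Mathlib

open WeakDual Filter Topology Classical

variable {A : Type} [NonUnitalNormedRing A] [StarRing A] [CStarRing A]
  [NormedSpace ℂ A] [IsScalarTower ℂ A A] [SMulCommClass ℂ A A] [CompleteSpace A] [StarModule ℂ A]

/-- Evaluation of a character of `D` at an element of `A` (taken to be `0` off `D`). -/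
noncomputable def evalD (D : NonUnitalStarSubalgebra ℂ A) (φ : characterSpace ℂ D) (a : A) : ℂ :=
  if h : a ∈ D then φ (⟨a, h⟩ : D) else 0

/-- The open support `supp°(a) = {φ ∈ D̂ : φ(a) ≠ 0}`. -/
def suppo (D : NonUnitalStarSubalgebra ℂ A) (a : A) : Set (characterSpace ℂ D) :=
  {φ | evalD D φ a ≠ 0}

/-- `n` is a normaliser of `D` in `A`. -/
def IsNormalizer (D : NonUnitalStarSubalgebra ℂ A) (n : A) : Prop :=
  ∀ d ∈ D, n * d * star n ∈ D ∧ star n * d * n ∈ D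

/-- `S` contains an approximate unit for `A`: there is a net in `S` converging
multiplicatively to the identity on every element of `A`. -/
def HasApproxUnit (S : Set A) : Prop :=
  ∃ (ι : Type) (l : Filter ι) (e : ι → A), l.NeBot ∧ (∀ i, e i ∈ S) ∧
    ∀ a : A, Tendsto (fun i => e i * a) l (nhds a) ∧ Tendsto (fun i => a * e i) l (nhds a)

/-- `α` is "the" homeomorphism `α_n : supp°(n*n) → supp°(nn*)` attached to a normaliser `n`,
i.e. a partial homeomorphism of `D̂` with source `supp°(n*n)`, target `supp°(nn*)`, and
satisfying `φ(n*n)·(α_n φ)(d) = φ(n* d n)` for all `φ` in the source and `d ∈ D`. -/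
def IsWeylHomeo (D : NonUnitalStarSubalgebra ℂ A) (n : A)
    (α : PartialHomeomorph (characterSpace ℂ D) (characterSpace ℂ D)) : Prop :=
  α.source = suppo D (star n * n) ∧ α.target = suppo D (n * star n) ∧
  ∀ φ ∈ α.source, ∀ d ∈ D, evalD D φ (star n * n) * evalD D (α φ) d = evalD D φ (star n * d * n)

/-- The relative commutant `D' = {a ∈ A : a d = d a for all d ∈ D}`, as a set. -/
def commutantSet (D : NonUnitalStarSubalgebra ℂ A) : Set A := {a | ∀ d ∈ D, a * d = d * a}

/-- The ideal `J_φ ⊆ D'`: the closure of `(ker φ)·D'`. -/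
noncomputable def Jset (D : NonUnitalStarSubalgebra ℂ A) (φ : characterSpace ℂ D) : Set A :=
  closure ((Submodule.span ℂ {x : A | ∃ k ∈ (D : Set A), ∃ a ∈ commutantSet D,
    evalD D φ k = 0 ∧ x = k * a} : Submodule ℂ A) : Set A)

/-- `e ∈ D'` represents the unit of `D'/J_φ`. -/
def IsUnitModJ (D : NonUnitalStarSubalgebra ℂ A) (φ : characterSpace ℂ D) (e : A) : Prop :=
  e ∈ commutantSet D ∧ ∀ a ∈ commutantSet D, e * a - a ∈ Jset D φ ∧ a * e - a ∈ Jset D φ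

/-- `D` is a weakly Cartan subalgebra of `A`. -/
def IsWeaklyCartan (D : NonUnitalStarSubalgebra ℂ A) : Prop :=
  IsClosed (D : Set A) ∧ (∀ x ∈ D, ∀ y ∈ D, x * y = y * x) ∧ HasApproxUnit (D : Set A) ∧
  (∀ φ : characterSpace ℂ D, ∃ e, IsUnitModJ D φ e) ∧
  (∀ φ : characterSpace ℂ D, ∃ d ∈ D, ∃ U : Set (characterSpace ℂ D),
    IsOpen U ∧ φ ∈ U ∧ ∀ ψ ∈ U, IsUnitModJ D ψ d)

/-- The relative commutant `D'` as a non-unital star subalgebra of `A`. -/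
def commutantAlg (D : NonUnitalStarSubalgebra ℂ A) : NonUnitalStarSubalgebra ℂ A where
  carrier := commutantSet D
  add_mem' := by
    intro a b ha hb d hd
    simp only [commutantSet, Set.mem_setOf_eq] at *
    rw [add_mul, mul_add, ha d hd, hb d hd]
  zero_mem' := by
    intro d _
    rw [zero_mul, mul_zero]
  mul_mem' := by
    intro a b ha hb d hd
    calc a * b * d = a * (b * d) := by rw [mul_assoc]
      _ = a * (d * b) := by rw [hb d hd]
      _ = a * d * b := by rw [mul_assoc]
      _ = d * a * b := by rw [ha d hd]
      _ = d * (a * b) := by rw [mul_assoc]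
  smul_mem' := by
    intro c a ha d hd
    rw [smul_mul_assoc, ha d hd, mul_smul_comm]
  star_mem' := by
    intro a ha d hd
    calc star a * d = star (star d * a) := by rw [star_mul, star_star]
      _ = star (a * star d) := by rw [← ha (star d) (star_mem hd)]
      _ = d * star a := by rw [star_mul, star_star]

/-- `w` is a representative in `A` of the unitary `U^φ_{n*m}` of `D'/J_φ`:
`w = φ(m*m)^{-1/2}·φ(n*n)^{-1/2}·(d n* m d)` for some admissible `U` and `d`. -/
noncomputable def WeylRep (D : NonUnitalStarSubalgebra ℂ A) (n m : A)
    (φ : characterSpace ℂ D) (w : A) : Prop :=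
  ∃ U : Set (characterSpace ℂ D), IsOpen U ∧ φ ∈ U ∧
    U ⊆ suppo D (star n * n) ∩ suppo D (star m * m) ∧
    (∃ αn αm : PartialHomeomorph (characterSpace ℂ D) (characterSpace ℂ D),
       IsWeylHomeo D n αn ∧ IsWeylHomeo D m αm ∧ Set.EqOn ⇑αn ⇑αm U) ∧
    ∃ d ∈ (D : Set A), suppo D d ⊆ U ∧ evalD D φ d = 1 ∧
      w = (evalD D φ (star m * m) ^ (-(1/2) : ℂ) * evalD D φ (star n * n) ^ (-(1/2) : ℂ)) •
        (d * (star n * m) * d)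

/-- The unitary `U^φ_{n*m}` of `D'/J_φ` lies in the connected component of the identity of
the unitary group of `D'/J_φ`; the quotient `D'/J_φ` is represented by an arbitrary
surjective star-homomorphism `π` from `D'` onto a unital C*-algebra `Q` with kernel `J_φ`. -/
noncomputable def InU0 (D : NonUnitalStarSubalgebra ℂ A) (n m : A)
    (φ : characterSpace ℂ D) : Prop :=
  ∀ (Q : Type) [NormedRing Q] [StarRing Q] [CStarRing Q] [NormedAlgebra ℂ Q]
    [CompleteSpace Q] [StarModule ℂ Q] (π : commutantAlg D →⋆ₙₐ[ℂ] Q),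
    Function.Surjective ⇑π →
    (∀ a : commutantAlg D, π a = 0 ↔ (a : A) ∈ Jset D φ) →
    ∃ w : commutantAlg D, WeylRep D n m φ (w : A) ∧
      ∃ hu : π w ∈ unitary Q, (⟨π w, hu⟩ : unitary Q) ∈ connectedComponent (1 : unitary Q)

/-- The relation `(n, φ) ∼ (m, ψ)` of Lemma 4.7 (for the trivial coaction). -/
noncomputable def WeylSimRaw (D : NonUnitalStarSubalgebra ℂ A) (n : A)
    (φ : characterSpace ℂ D) (m : A) (ψ : characterSpace ℂ D) : Prop :=
  φ = ψ ∧
  (∃ U : Set (characterSpace ℂ D), IsOpen U ∧ φ ∈ U ∧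
    U ⊆ suppo D (star n * n) ∩ suppo D (star m * m) ∧
    ∃ αn αm : PartialHomeomorph (characterSpace ℂ D) (characterSpace ℂ D),
      IsWeylHomeo D n αn ∧ IsWeylHomeo D m αm ∧ Set.EqOn ⇑αn ⇑αm U) ∧
  InU0 D n m φ

/-- The set of pairs `(n, φ)` with `n ∈ N(D)` and `φ ∈ supp°(n*n)`. -/
def WeylPair (D : NonUnitalStarSubalgebra ℂ A) : Type :=
  {p : A × characterSpace ℂ D // IsNormalizer D p.1 ∧ p.2 ∈ suppo D (star p.1 * p.1)}

/-!
For `d ∈ D` the map `T d = n* d n` is a bounded linear self-map of `D`, and since `n n* ∈ D`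
commutes with `D` it satisfies `n*n · T (d e) = T d · T e`. Hence `φ ↦ φ(n*n)⁻¹ · (φ ∘ T)`
sends a character with `φ(n*n) ≠ 0` to a character, weak-* continuously in `φ`. The same
construction for `n*` inverts it, because `T_n* (T_n d) = (n n*) d (n n*)`, and uniqueness is
forced by the defining formula. That `n*n` lies in `D` at all comes from `n* e_λ n → n*n` for an
approximate unit `(e_λ)` in the closed subalgebra `D`.
-/

namespace WeakDual.CharacterSpace

variable {𝕜 B : Type*} [NormedField 𝕜] [NonUnitalNonAssocSemiring B] [TopologicalSpace B]
  [Module 𝕜 B]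

noncomputable def twist (T : B →L[𝕜] B) (c : B) (φ : characterSpace 𝕜 B) :
    WeakDual 𝕜 B :=
  (φ c)⁻¹ • (toCLM φ).comp T

@[simp]
theorem twist_apply (T : B →L[𝕜] B) (c : B) (φ : characterSpace 𝕜 B) (x : B) :
    twist T c φ x = (φ c)⁻¹ * φ (T x) :=
  rfl

theorem continuousOn_twist (T : B →L[𝕜] B) (c : B) :
    ContinuousOn (twist T c) {φ : characterSpace 𝕜 B | φ c ≠ 0} := by
  have heval : ∀ x : B, Continuous fun φ : characterSpace 𝕜 B => φ x := fun x =>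
    (eval_continuous x).comp continuous_subtype_val
  refine continuousOn_iff_continuous_domRestrict.2 (continuous_of_continuous_eval fun x => ?_)
  exact ((heval c).comp continuous_subtype_val |>.inv₀ fun φ => φ.2).mul
    ((heval (T x)).comp continuous_subtype_val)

variable {T : B →L[𝕜] B} {c c' : B}

theorem twist_mem_characterSpace (hmul : ∀ x y, c * T (x * y) = T x * T y) (hc' : T c' = c * c)
    {φ : characterSpace 𝕜 B} (hφ : φ c ≠ 0) : twist T c φ ∈ characterSpace 𝕜 B := by
  refine ⟨fun h => hφ ?_, fun x y => ?_⟩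
  · have h' : twist T c φ c' = 0 := by rw [h]; rfl
    simp [hc', hφ] at h'
  · have key := congrArg φ (hmul x y)
    simp only [map_mul] at key
    simp only [twist_apply]
    field_simp
    linear_combination key

noncomputable def twistChar (T : B →L[𝕜] B) (c : B) (φ : characterSpace 𝕜 B) :
    characterSpace 𝕜 B :=
  if h : twist T c φ ∈ characterSpace 𝕜 B then ⟨_, h⟩ else φ

variable (hmul : ∀ x y, c * T (x * y) = T x * T y) (hc' : T c' = c * c)
include hmul hc'

theorem coe_twistChar {φ : characterSpace 𝕜 B} (hφ : φ c ≠ 0) :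
    (twistChar T c φ : WeakDual 𝕜 B) = twist T c φ := by
  rw [twistChar, dif_pos (twist_mem_characterSpace hmul hc' hφ)]

theorem twistChar_apply {φ : characterSpace 𝕜 B} (hφ : φ c ≠ 0) (x : B) :
    twistChar T c φ x = (φ c)⁻¹ * φ (T x) := by
  rw [← CharacterSpace.coe_coe, coe_twistChar hmul hc' hφ, twist_apply]

theorem mul_twistChar_apply {φ : characterSpace 𝕜 B} (hφ : φ c ≠ 0) (x : B) :
    φ c * twistChar T c φ x = φ (T x) := by
  rw [twistChar_apply hmul hc' hφ, mul_inv_cancel_left₀ hφ]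

theorem twistChar_apply_of_eq_mul_self {φ : characterSpace 𝕜 B} (hφ : φ c ≠ 0) :
    twistChar T c φ c' = φ c := by
  rw [twistChar_apply hmul hc' hφ, hc', map_mul]
  field_simp

theorem continuousOn_twistChar :
    ContinuousOn (twistChar T c) {φ : characterSpace 𝕜 B | φ c ≠ 0} := by
  rw [IsInducing.subtypeVal.continuousOn_iff]
  exact (continuousOn_twist T c).congr fun φ hφ => coe_twistChar hmul hc' hφ

theorem eq_twistChar {φ ψ : characterSpace 𝕜 B} (hφ : φ c ≠ 0)
    (hψ : ∀ x, φ c * ψ x = φ (T x)) : ψ = twistChar T c φ :=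
  CharacterSpace.ext fun x =>
    mul_left_cancel₀ hφ <| (hψ x).trans (mul_twistChar_apply hmul hc' hφ x).symm

theorem twistChar_twistChar {T' : B →L[𝕜] B} (hmul' : ∀ x y, c' * T' (x * y) = T' x * T' y)
    (hc : T' c = c' * c') (hTT' : ∀ x, T (T' x) = c * x * c) {φ : characterSpace 𝕜 B}
    (hφ : φ c ≠ 0) : twistChar T' c' (twistChar T c φ) = φ := by
  have hψ : twistChar T c φ c' ≠ 0 := by rwa [twistChar_apply_of_eq_mul_self hmul hc' hφ]
  refine CharacterSpace.ext fun x => ?_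
  rw [twistChar_apply hmul' hc hψ, twistChar_apply_of_eq_mul_self hmul hc' hφ,
    twistChar_apply hmul hc' hφ, hTT', map_mul, map_mul]
  field_simp

omit hmul hc'

structure IsTwistPair (T : B →L[𝕜] B) (c : B) (T' : B →L[𝕜] B) (c' : B) : Prop where
  map_mul : ∀ x y, c * T (x * y) = T x * T y
  apply_eq_mul_self : T c' = c * c
  comp_eq : ∀ x, T (T' x) = c * x * c

noncomputable def twistPartialHomeomorph {T' : B →L[𝕜] B} (h : IsTwistPair T c T' c')
    (h' : IsTwistPair T' c' T c) :
    PartialHomeomorph (characterSpace 𝕜 B) (characterSpace 𝕜 B) where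
  toFun := twistChar T c
  invFun := twistChar T' c'
  source := {φ | φ c ≠ 0}
  target := {φ | φ c' ≠ 0}
  map_source' φ hφ := by
    rwa [Set.mem_ofPred_eq, twistChar_apply_of_eq_mul_self h.map_mul h.apply_eq_mul_self hφ]
  map_target' φ hφ := by
    rwa [Set.mem_ofPred_eq, twistChar_apply_of_eq_mul_self h'.map_mul h'.apply_eq_mul_self hφ]
  left_inv' _ hφ := twistChar_twistChar h.map_mul h.apply_eq_mul_self h'.map_mul
    h'.apply_eq_mul_self h.comp_eq hφ
  right_inv' _ hφ := twistChar_twistChar h'.map_mul h'.apply_eq_mul_self h.map_mul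
    h.apply_eq_mul_self h'.comp_eq hφ
  continuousOn_toFun := continuousOn_twistChar h.map_mul h.apply_eq_mul_self
  continuousOn_invFun := continuousOn_twistChar h'.map_mul h'.apply_eq_mul_self

end WeakDual.CharacterSpace

open WeakDual.CharacterSpace

section MulLeftRight

variable (𝕜 : Type*) {E S : Type*} [NormedField 𝕜] [NonUnitalSemiring E] [TopologicalSpace E]
  [ContinuousMul E] [Module 𝕜 E] [IsScalarTower 𝕜 E E] [SMulCommClass 𝕜 E E]
  [SetLike S E] [NonUnitalSubsemiringClass S E] [SMulMemClass S 𝕜 E] (s : S) {u v : E}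

def mulLeftRightCLM (h : ∀ d ∈ s, u * d * v ∈ s) : s →L[𝕜] s where
  toFun d := ⟨u * d * v, h d d.2⟩
  map_add' x y := Subtype.ext (by simp [mul_add, add_mul])
  map_smul' c x := Subtype.ext (by simp [mul_smul_comm, smul_mul_assoc])
  cont := by fun_prop

variable {𝕜 s} (h : ∀ d ∈ s, u * d * v ∈ s) (huv : u * v ∈ s)

theorem mul_mulLeftRightCLM_mul (hvu : v * u ∈ s) (hs : ∀ x ∈ s, ∀ y ∈ s, x * y = y * x)
    (x y : s) :
    ⟨u * v, huv⟩ * mulLeftRightCLM 𝕜 s h (x * y) =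
      mulLeftRightCLM 𝕜 s h x * mulLeftRightCLM 𝕜 s h y :=
  Subtype.ext <| show u * v * (u * (x * y) * v) = u * x * v * (u * y * v) by
    calc u * v * (u * (x * y) * v) = u * (v * u * x) * y * v := by simp only [mul_assoc]
      _ = u * (x * (v * u)) * y * v := by rw [hs x x.2 _ hvu]
      _ = u * x * v * (u * y * v) := by simp only [mul_assoc]

theorem mulLeftRightCLM_apply_mul_swap (hvu : v * u ∈ s) :
    mulLeftRightCLM 𝕜 s h ⟨v * u, hvu⟩ = ⟨u * v, huv⟩ * ⟨u * v, huv⟩ :=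
  Subtype.ext <| show u * (v * u) * v = u * v * (u * v) by simp only [mul_assoc]

theorem mulLeftRightCLM_mulLeftRightCLM (h' : ∀ d ∈ s, v * d * u ∈ s) (x : s) :
    mulLeftRightCLM 𝕜 s h (mulLeftRightCLM 𝕜 s h' x) =
      ⟨u * v, huv⟩ * x * ⟨u * v, huv⟩ :=
  Subtype.ext <| show u * (v * x * u) * v = u * v * x * (u * v) by simp only [mul_assoc]

theorem isTwistPair_mulLeftRightCLM (hvu : v * u ∈ s) (hs : ∀ x ∈ s, ∀ y ∈ s, x * y = y * x)
    (h' : ∀ d ∈ s, v * d * u ∈ s) :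
    IsTwistPair (mulLeftRightCLM 𝕜 s h) ⟨u * v, huv⟩
      (mulLeftRightCLM 𝕜 s h') ⟨v * u, hvu⟩ :=
  ⟨mul_mulLeftRightCLM_mul h huv hvu hs, mulLeftRightCLM_apply_mul_swap h huv hvu,
    mulLeftRightCLM_mulLeftRightCLM h huv h'⟩

end MulLeftRight

omit [StarRing A] [CStarRing A] [NormedSpace ℂ A] [IsScalarTower ℂ A A] [SMulCommClass ℂ A A]
  [CompleteSpace A] [StarModule ℂ A] in
theorem HasApproxUnit.mul_mem {S : Set A} (hS : HasApproxUnit S) (hS_closed : IsClosed S)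
    {u v : A} (h : ∀ d ∈ S, u * d * v ∈ S) : u * v ∈ S := by
  obtain ⟨ι, l, e, hl, he, hconv⟩ := hS
  exact hS_closed.mem_of_tendsto (((hconv v).1).const_mul u)
    (Eventually.of_forall fun i => mul_assoc u (e i) v ▸ h (e i) (he i))

section Normalizer

variable {D : NonUnitalStarSubalgebra ℂ A}

section

omit [CStarRing A] [IsScalarTower ℂ A A] [SMulCommClass ℂ A A] [CompleteSpace A]
  [StarModule ℂ A]

theorem evalD_of_mem {φ : characterSpace ℂ D} {a : A} (h : a ∈ D) :
    evalD D φ a = φ ⟨a, h⟩ :=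
  dif_pos h

theorem suppo_of_mem {a : A} (h : a ∈ D) : suppo D a = {φ | φ ⟨a, h⟩ ≠ 0} :=
  Set.ext fun _ => by rw [suppo, Set.mem_ofPred_eq, Set.mem_ofPred_eq, evalD_of_mem h]

end

omit [CStarRing A] [CompleteSpace A] [StarModule ℂ A]

noncomputable def weylHomeo (hDabelian : ∀ x ∈ D, ∀ y ∈ D, x * y = y * x) {n : A}
    (hn : IsNormalizer D n) (huv : star n * n ∈ D) (hvu : n * star n ∈ D) :
    PartialHomeomorph (characterSpace ℂ D) (characterSpace ℂ D) :=
  have hc : ∀ d ∈ D, star n * d * n ∈ D := fun d hd => (hn d hd).2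
  have hc' : ∀ d ∈ D, n * d * star n ∈ D := fun d hd => (hn d hd).1
  twistPartialHomeomorph (isTwistPair_mulLeftRightCLM hc huv hvu hDabelian hc')
    (isTwistPair_mulLeftRightCLM hc' hvu huv hDabelian hc)

variable (hDabelian : ∀ x ∈ D, ∀ y ∈ D, x * y = y * x) {n : A} (hn : IsNormalizer D n)
  (huv : star n * n ∈ D) (hvu : n * star n ∈ D)

theorem isWeylHomeo_weylHomeo : IsWeylHomeo D n (weylHomeo hDabelian hn huv hvu) := by
  refine ⟨(suppo_of_mem huv).symm, (suppo_of_mem hvu).symm, fun φ hφ d hd => ?_⟩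
  have hc : ∀ d ∈ D, star n * d * n ∈ D := fun d hd => (hn d hd).2
  rw [evalD_of_mem huv, evalD_of_mem hd, evalD_of_mem (hc d hd)]
  exact mul_twistChar_apply (mul_mulLeftRightCLM_mul hc huv hvu hDabelian)
    (mulLeftRightCLM_apply_mul_swap hc huv hvu) hφ ⟨d, hd⟩

theorem IsWeylHomeo.eqOn_weylHomeo
    {β : PartialHomeomorph (characterSpace ℂ D) (characterSpace ℂ D)}
    (hβ : IsWeylHomeo D n β) :
    Set.EqOn β (weylHomeo hDabelian hn huv hvu) β.source := by
  intro φ hφ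
  have hc : ∀ d ∈ D, star n * d * n ∈ D := fun d hd => (hn d hd).2
  have hφ' : φ ⟨star n * n, huv⟩ ≠ 0 := by rwa [hβ.1, suppo_of_mem huv] at hφ
  refine eq_twistChar (mul_mulLeftRightCLM_mul hc huv hvu hDabelian)
    (mulLeftRightCLM_apply_mul_swap hc huv hvu) hφ' fun d => ?_
  have h := hβ.2.2 φ hφ d d.2
  rwa [evalD_of_mem huv, evalD_of_mem d.2, evalD_of_mem (hc d d.2)] at h

end Normalizer

theorem statement_2
    (D : NonUnitalStarSubalgebra ℂ A) (hDclosed : IsClosed (D : Set A))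
    (hDabelian : ∀ x ∈ D, ∀ y ∈ D, x * y = y * x)
    (hDapprox : HasApproxUnit (D : Set A))
    (n : A) (hn : IsNormalizer D n) :
    ∃ α : PartialHomeomorph (characterSpace ℂ D) (characterSpace ℂ D),
      IsWeylHomeo D n α ∧
      ∀ β : PartialHomeomorph (characterSpace ℂ D) (characterSpace ℂ D),
        IsWeylHomeo D n β → Set.EqOn ⇑β ⇑α α.source := by
  have huv := hDapprox.mul_mem hDclosed fun d hd => (hn d hd).2
  have hvu := hDapprox.mul_mem hDclosed fun d hd => (hn d hd).1
  have hα := isWeylHomeo_weylHomeo hDabelian hn huv hvu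
  refine ⟨_, hα, fun β hβ φ hφ => hβ.eqOn_weylHomeo hDabelian hn huv hvu ?_⟩
  rwa [hβ.1, ← hα.1]
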